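/- (Proposition 1, minimizer form.) Let X and Y be real N×d matrices. Suppose the N×N permutation matrix P* maximizes P ↦ ‖Xᵀ P Y‖_* over all N×N permutation matrices, and suppose Xᵀ P* Y = U Σ Vᵀ with U, V d×d orthogonal and Σ diagonal with nonnegative entries (a singular value decomposition). Then the pair (P*, U Vᵀ) minimizes ‖XW − PY‖_F² over all pairs of an N×N permutation matrix P and a d×d orthogonal matrix W; note Uᵀ(UVᵀ)V = I. -/

import Mathlib

open Matrix

/-- `P` is a permutation matrix: the matrix of some permutation of the index set. -/
def IsPermMatrix {N : ℕ} (P : Matrix (Fin N) (Fin N) ℝ) : Prop :=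
  ∃ σ : Equiv.Perm (Fin N), P = σ.permMatrix ℝ

/-- Squared Frobenius norm: `‖A‖_F² = Tr (Aᵀ A)`. -/
def frobSq {m n : ℕ} (A : Matrix (Fin m) (Fin n) ℝ) : ℝ := (Aᵀ * A).trace

/-- The PSD square root, as `Matrix.PosSemidef.sqrt` was defined in older Mathlib. -/
noncomputable def psdSqrt {n : ℕ} {M : Matrix (Fin n) (Fin n) ℝ} (hA : M.PosSemidef) :
    Matrix (Fin n) (Fin n) ℝ :=
  (hA.1.eigenvectorUnitary : Matrix (Fin n) (Fin n) ℝ) *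
    diagonal ((↑) ∘ (√·) ∘ hA.1.eigenvalues) *
    (star hA.1.eigenvectorUnitary : Matrix (Fin n) (Fin n) ℝ)

/-- Nuclear (trace) norm: `‖A‖_* = Tr √(AᵀA)`, where `√` is the PSD square root. -/
noncomputable def nuclearNorm {m n : ℕ} (A : Matrix (Fin m) (Fin n) ℝ) : ℝ :=
  (psdSqrt (Matrix.posSemidef_conjTranspose_mul_self A)).trace

/-
Expanding the square, `‖XW − PY‖_F² = ‖X‖_F² + ‖Y‖_F² − 2 Tr (Wᵀ Xᵀ P Y)` for permutation `P` and
orthogonal `W`, so the problem is to maximize `Tr (Wᵀ Xᵀ P Y)`. For every `M`, `Tr (Wᵀ M) ≤ ‖M‖_*`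
over matrices with orthonormal columns (Cauchy–Schwarz column by column in an eigenbasis of
`MᵀM`), and `W = U Vᵀ` attains `‖M‖_*` on the SVD `M = U Σ Vᵀ`. Hence `(P*, U Vᵀ)` attains
`max_P ‖Xᵀ P Y‖_*`, which bounds `Tr (Wᵀ Xᵀ P Y)` for every pair `(P, W)`.
-/

theorem Matrix.trace_transpose_mul_le_sum_sqrt_diag {m n : Type*} [Fintype m] [Fintype n]
    (A B : Matrix m n ℝ) :
    (Aᵀ * B).trace ≤ ∑ i, √((Aᵀ * A) i i) * √((Bᵀ * B) i i) := by
  simp only [trace, diag, mul_apply, transpose_apply, ← sq]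
  exact Finset.sum_le_sum fun i _ => Real.sum_mul_le_sqrt_mul_sqrt _ _ _

lemma IsPermMatrix.transpose_mul_self {N : ℕ} {P : Matrix (Fin N) (Fin N) ℝ}
    (hP : IsPermMatrix P) : Pᵀ * P = 1 := by
  obtain ⟨σ, rfl⟩ := hP
  rw [transpose_permMatrix, ← permMatrix_mul, mul_inv_cancel, permMatrix_one]

section Frobenius

variable {m n k : ℕ}

lemma frobSq_sub (A B : Matrix (Fin m) (Fin n) ℝ) :
    frobSq (A - B) = frobSq A + frobSq B - 2 * (Aᵀ * B).trace := by
  have hBA : (Bᵀ * A).trace = (Aᵀ * B).trace := by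
    rw [← trace_transpose, transpose_mul, transpose_transpose]
  simp only [frobSq, transpose_sub, Matrix.sub_mul, Matrix.mul_sub, trace_sub, hBA]
  ring

lemma frobSq_mul_of_mul_transpose_eq_one (A : Matrix (Fin m) (Fin n) ℝ)
    {W : Matrix (Fin n) (Fin k) ℝ} (hW : W * Wᵀ = 1) : frobSq (A * W) = frobSq A := by
  rw [frobSq, transpose_mul, Matrix.mul_assoc, trace_mul_comm, Matrix.mul_assoc, Matrix.mul_assoc,
    hW, Matrix.mul_one, frobSq]

lemma frobSq_mul_of_transpose_mul_eq_one {P : Matrix (Fin k) (Fin m) ℝ}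
    (hP : Pᵀ * P = 1) (A : Matrix (Fin m) (Fin n) ℝ) : frobSq (P * A) = frobSq A := by
  rw [frobSq, transpose_mul, Matrix.mul_assoc, ← Matrix.mul_assoc Pᵀ, hP, Matrix.one_mul, frobSq]

lemma frobSq_mul_sub_mul (X Y : Matrix (Fin m) (Fin n) ℝ) {P : Matrix (Fin m) (Fin m) ℝ}
    {W : Matrix (Fin n) (Fin n) ℝ} (hP : Pᵀ * P = 1) (hW : Wᵀ * W = 1) :
    frobSq (X * W - P * Y) = frobSq X + frobSq Y - 2 * (Wᵀ * (Xᵀ * P * Y)).trace := by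
  rw [frobSq_sub, frobSq_mul_of_mul_transpose_eq_one X (mul_eq_one_comm.mp hW),
    frobSq_mul_of_transpose_mul_eq_one hP, transpose_mul]
  simp only [Matrix.mul_assoc]

end Frobenius

section NuclearNorm

variable {m n : ℕ}

theorem trace_transpose_mul_le_nuclearNorm {W : Matrix (Fin m) (Fin n) ℝ} (hW : Wᵀ * W = 1)
    (M : Matrix (Fin m) (Fin n) ℝ) : (Wᵀ * M).trace ≤ nuclearNorm M := by
  set hH := (posSemidef_conjTranspose_mul_self M).1
  set Q : Matrix (Fin n) (Fin n) ℝ := ↑hH.eigenvectorUnitary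
  have hQ : Qᵀ * Q = 1 := by
    simpa [Q, star_eq_conjTranspose, conjTranspose_eq_transpose_of_trivial]
      using Unitary.coe_star_mul_self hH.eigenvectorUnitary
  have hWQ : (W * Q)ᵀ * (W * Q) = 1 := by
    rw [transpose_mul, Matrix.mul_assoc, ← Matrix.mul_assoc Wᵀ, hW, Matrix.one_mul, hQ]
  have hMQ : (M * Q)ᵀ * (M * Q) = diagonal hH.eigenvalues := by
    simpa [Q, Matrix.mul_assoc, star_eq_conjTranspose, conjTranspose_eq_transpose_of_trivial]
      using hH.conjStarAlgAut_star_eigenvectorUnitary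
  have hnuc : nuclearNorm M = ∑ i, √(hH.eigenvalues i) := by
    rw [nuclearNorm, psdSqrt, trace_mul_cycle, Unitary.coe_star_mul_self, Matrix.one_mul,
      trace_diagonal]
    rfl
  calc (Wᵀ * M).trace = ((W * Q)ᵀ * (M * Q)).trace := by
        rw [transpose_mul, Matrix.mul_assoc, trace_mul_comm Qᵀ, Matrix.mul_assoc, Matrix.mul_assoc,
          mul_eq_one_comm.mp hQ, Matrix.mul_one]
    _ ≤ ∑ i, √(((W * Q)ᵀ * (W * Q)) i i) * √(((M * Q)ᵀ * (M * Q)) i i) :=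
        trace_transpose_mul_le_sum_sqrt_diag _ _
    _ = nuclearNorm M := by rw [hWQ, hMQ, hnuc]; simp

open scoped MatrixOrder in
lemma psdSqrt_eq_cfcSqrt {A : Matrix (Fin n) (Fin n) ℝ} (hA : A.PosSemidef) :
    psdSqrt hA = CFC.sqrt A := by
  rw [CFC.sqrt_eq_cfc, cfc_nnreal_eq_real _ A, hA.1.cfc_eq]
  simp only [IsHermitian.cfc, psdSqrt, Unitary.conjStarAlgAut_apply]
  congr 3
  funext i
  simp [Real.coe_sqrt, Real.coe_toNNReal', max_eq_left (hA.eigenvalues_nonneg i)]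

open scoped MatrixOrder in
lemma nuclearNorm_eq_trace_of_mul_self {S : Matrix (Fin n) (Fin n) ℝ} (hS : S.PosSemidef)
    {M : Matrix (Fin m) (Fin n) ℝ} (hSM : S * S = Mᵀ * M) : nuclearNorm M = S.trace := by
  rw [nuclearNorm, psdSqrt_eq_cfcSqrt, conjTranspose_eq_transpose_of_trivial,
    CFC.sqrt_unique hSM hS.nonneg]

lemma nuclearNorm_mul_mul_transpose {k : Type*} [Fintype k] [DecidableEq k]
    {U : Matrix (Fin m) k ℝ} {V : Matrix (Fin n) k ℝ} (hU : Uᵀ * U = 1) (hV : Vᵀ * V = 1)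
    {D : Matrix k k ℝ} (hD : D.PosSemidef) : nuclearNorm (U * D * Vᵀ) = D.trace := by
  have hDD : Dᵀ = D := by simpa [conjTranspose_eq_transpose_of_trivial] using hD.1.eq
  have hS : (V * D * Vᵀ).PosSemidef := by
    simpa [conjTranspose_eq_transpose_of_trivial] using hD.mul_mul_conjTranspose_same V
  rw [nuclearNorm_eq_trace_of_mul_self hS, trace_mul_cycle, hV, Matrix.one_mul]
  simp only [transpose_mul, transpose_transpose, hDD, Matrix.mul_assoc]
  rw [← Matrix.mul_assoc Uᵀ, hU, Matrix.one_mul, ← Matrix.mul_assoc Vᵀ, hV, Matrix.one_mul]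

end NuclearNorm

/-- Proposition 1, minimizer form: if the permutation matrix `P*` maximizes
`P ↦ ‖Xᵀ P Y‖_*` and `Xᵀ P* Y = U D Vᵀ` is an SVD, then `(P*, U Vᵀ)` minimizes
`‖XW − PY‖_F²` over pairs of a permutation matrix and an orthogonal matrix;
note `Uᵀ (U Vᵀ) V = 1`. -/
theorem stmt6 {N d : ℕ} (X Y : Matrix (Fin N) (Fin d) ℝ)
    (Pstar : Matrix (Fin N) (Fin N) ℝ) (U V D : Matrix (Fin d) (Fin d) ℝ)
    (hPstar : IsPermMatrix Pstar)
    (hmax : ∀ P : Matrix (Fin N) (Fin N) ℝ, IsPermMatrix P →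
      nuclearNorm (Xᵀ * P * Y) ≤ nuclearNorm (Xᵀ * Pstar * Y))
    (hU : Uᵀ * U = 1) (hV : Vᵀ * V = 1) (hD : D.IsDiag) (hDnn : ∀ i, 0 ≤ D i i)
    (hSVD : Xᵀ * Pstar * Y = U * D * Vᵀ) :
    (∀ (P : Matrix (Fin N) (Fin N) ℝ) (W : Matrix (Fin d) (Fin d) ℝ),
        IsPermMatrix P → Wᵀ * W = 1 →
        frobSq (X * (U * Vᵀ) - Pstar * Y) ≤ frobSq (X * W - P * Y)) ∧
    Uᵀ * (U * Vᵀ) * V = 1 := by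
  have hW₀ : (U * Vᵀ)ᵀ * (U * Vᵀ) = 1 := by
    rw [transpose_mul, transpose_transpose, Matrix.mul_assoc, ← Matrix.mul_assoc Uᵀ, hU,
      Matrix.one_mul, mul_eq_one_comm.mp hV]
  have hDpsd : D.PosSemidef := by
    rw [← hD.diagonal_diag]
    exact posSemidef_diagonal_iff.mpr hDnn
  have hattain : ((U * Vᵀ)ᵀ * (Xᵀ * Pstar * Y)).trace = nuclearNorm (Xᵀ * Pstar * Y) := by
    rw [hSVD, nuclearNorm_mul_mul_transpose hU hV hDpsd, transpose_mul, transpose_transpose,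
      Matrix.mul_assoc, ← Matrix.mul_assoc Uᵀ, ← Matrix.mul_assoc Uᵀ, hU, Matrix.one_mul,
      trace_mul_comm, Matrix.mul_assoc, hV, Matrix.mul_one]
  refine ⟨fun P W hP hW => ?_, ?_⟩
  · rw [frobSq_mul_sub_mul X Y hPstar.transpose_mul_self hW₀,
      frobSq_mul_sub_mul X Y hP.transpose_mul_self hW]
    have := (trace_transpose_mul_le_nuclearNorm hW _).trans (hmax P hP)
    linarith
  · rw [Matrix.mul_assoc, Matrix.mul_assoc, hV, Matrix.mul_one, hU]
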